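/- For g = sl₂(ℂ) and λ ∈ ℂ with λ ∉ ℤ₊, the Verma module M(λ) is simple. -/

import Mathlib

/-!
We realize the Verma module `M(λ)` over `sl₂(ℂ)` concretely on the vector space `ℕ →₀ ℂ`,
with basis `m_k = f^k • v` (`k ∈ ℕ`), and the standard actions
`f • m_k = m_{k+1}`, `h • m_k = (λ - 2k) m_k`, `e • m_k = k(λ - k + 1) m_{k-1}`.
-/

/-- Action of `f` on the Verma module `M(λ)` for `sl₂(ℂ)`: `f • m_k = m_{k+1}`. -/
noncomputable def vermaF : (ℕ →₀ ℂ) →ₗ[ℂ] (ℕ →₀ ℂ) :=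
  Finsupp.lmapDomain ℂ ℂ (· + 1)

/-- Action of `h` on `M(λ)`: `h • m_k = (λ - 2k) m_k`. -/
noncomputable def vermaH (lam : ℂ) : (ℕ →₀ ℂ) →ₗ[ℂ] (ℕ →₀ ℂ) :=
  Finsupp.lsum ℂ fun k => (lam - 2 * (k : ℂ)) • Finsupp.lsingle k

/-- Action of `e` on `M(λ)`: `e • m_k = k (λ - k + 1) m_{k-1}` (and `e • m_0 = 0`). -/
noncomputable def vermaE (lam : ℂ) : (ℕ →₀ ℂ) →ₗ[ℂ] (ℕ →₀ ℂ) :=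
  Finsupp.lsum ℂ fun k => ((k : ℂ) * (lam - (k : ℂ) + 1)) • Finsupp.lsingle (k - 1)

/-- Pointwise formula for the action of `e`: the `j`-th coefficient of `e • x` is
`(j+1)(λ - j)` times the `(j+1)`-st coefficient of `x`. -/
lemma vermaE_apply (lam : ℂ) (x : ℕ →₀ ℂ) (j : ℕ) :
    vermaE lam x j = ((j : ℂ) + 1) * (lam - j) * x (j + 1) := by
  induction x using Finsupp.induction_linear with
  | zero => simp
  | add f g hf hg => simp [map_add, hf, hg]; ring
  | single k a =>
    rcases k with _ | m
    · simp [vermaE, Finsupp.single_apply]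
    · simp only [vermaE, Finsupp.lsum_single, LinearMap.smul_apply, Finsupp.lsingle_apply,
        Finsupp.smul_single, Finsupp.single_apply, smul_eq_mul, Nat.succ_sub_one]
      by_cases h : m = j
      · subst h; simp only [if_pos rfl]; push_cast; ring
      · rw [if_neg h, if_neg (fun hh => h (Nat.succ_injective hh))]; ring

lemma vermaF_single (n : ℕ) : vermaF (Finsupp.single n (1:ℂ)) = Finsupp.single (n+1) 1 := by
  simp [vermaF, Finsupp.mapDomain_single]

/-- for `g = sl₂(ℂ)` and `λ ∈ ℂ` with `λ ∉ ℤ₊`, the Verma module `M(λ)` is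
simple: every subspace invariant under the actions of `e`, `f` and `h` is `⊥` or `⊤`. -/
theorem sl2_verma_simple_of_not_nat (lam : ℂ) (hlam : ∀ n : ℕ, lam ≠ (n : ℂ)) :
    ∀ N : Submodule ℂ (ℕ →₀ ℂ),
      (∀ x ∈ N, vermaE lam x ∈ N) → (∀ x ∈ N, vermaF x ∈ N) →
      (∀ x ∈ N, vermaH lam x ∈ N) → N = ⊥ ∨ N = ⊤ := by
  intro N hE hF _
  by_cases hbot : N = ⊥
  · exact Or.inl hbot
  right
  -- some nonzero element
  obtain ⟨x, hxN, hx0⟩ := Submodule.exists_mem_ne_zero_of_ne_bot hbot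
  -- key: the highest weight vector `m_0` lies in `N`
  have key : ∀ d : ℕ, ∀ y ∈ N, y ≠ 0 → (∀ k, d < k → y k = 0) →
      Finsupp.single 0 (1:ℂ) ∈ N := by
    intro d
    induction d with
    | zero =>
      intro y hyN hy0 hsupp
      have hy : y = Finsupp.single 0 (y 0) := by
        ext j
        rcases j with _ | m
        · simp
        · exact (hsupp _ (Nat.succ_pos m)).trans (Finsupp.single_eq_of_ne (by omega)).symm
      have h0 : y 0 ≠ 0 := by
        intro h; apply hy0; rw [hy, h, Finsupp.single_zero]
      have : Finsupp.single 0 (1:ℂ) = (y 0)⁻¹ • y := by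
        rw [hy]; simp [Finsupp.smul_single, inv_mul_cancel₀ h0]
      rw [this]; exact N.smul_mem _ hyN
    | succ d ih =>
      intro y hyN hy0 hsupp
      by_cases htop : y (d+1) = 0
      · refine ih y hyN hy0 (fun k hk => ?_)
        rcases Nat.lt_or_ge (d+1) k with h | h
        · exact hsupp k h
        · have : k = d + 1 := le_antisymm h hk
          rw [this]; exact htop
      · set z := vermaE lam y with hz
        have hzN : z ∈ N := hE y hyN
        have hcoef : ∀ j : ℕ, ((j:ℂ) + 1) ≠ 0 ∧ (lam - (j:ℂ)) ≠ 0 := by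
          intro j
          refine ⟨?_, sub_ne_zero.2 (hlam j)⟩
          have : ((j+1:ℕ):ℂ) ≠ 0 := Nat.cast_ne_zero.2 (Nat.succ_ne_zero j)
          push_cast at this; exact this
        have hzd : z d ≠ 0 := by
          rw [hz, vermaE_apply]
          exact mul_ne_zero (mul_ne_zero (hcoef d).1 (hcoef d).2) htop
        have hz0 : z ≠ 0 := fun h => hzd (by rw [h]; simp)
        refine ih z hzN hz0 (fun k hk => ?_)
        rw [hz, vermaE_apply, hsupp (k+1) (by omega), mul_zero]
  have h1 : Finsupp.single 0 (1:ℂ) ∈ N := by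
    refine key (x.support.sup id) x hxN hx0 (fun k hk => ?_)
    by_contra h
    exact absurd (Finset.le_sup (f := id) (Finsupp.mem_support_iff.2 h)) (by simpa using Nat.not_le.2 hk)
  have hall : ∀ n : ℕ, Finsupp.single n (1:ℂ) ∈ N := by
    intro n
    induction n with
    | zero => exact h1
    | succ m ihm => rw [← vermaF_single]; exact hF _ ihm
  rw [eq_top_iff]
  intro y _
  have : y = y.sum (fun k a => Finsupp.single k a) := (Finsupp.sum_single y).symm
  rw [this]
  refine Submodule.sum_mem N (fun k _ => ?_)
  show Finsupp.single k (y k) ∈ N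
  have : Finsupp.single k (y k) = (y k) • Finsupp.single k (1:ℂ) := by
    rw [Finsupp.smul_single, smul_eq_mul, mul_one]
  rw [this]
  exact N.smul_mem _ (hall k)
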